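/- Let T be the integral operator on H_w with kernel q, i.e., Tf(x) = ∫₀^∞ q(x,y) f'(y) dy with domain the set of f ∈ H_w for which this integral is absolutely convergent for all x and defines an element of H_w. If q(x,·)/√w ∈ L²(ℝ≥0) for every x ≥ 0, then T is a closed linear operator. -/

import Mathlib

open MeasureTheory Set Filter

noncomputable section

/-- Inner product on the Filipović space `H_w`, for functions `g, h` with chosen
(weak) derivatives `g', h'`:  `⟨g,h⟩_w = g(0)h(0) + ∫₀^∞ w g' h'`. -/
def wInner (w g g' h h' : ℝ → ℝ) : ℝ :=
  g 0 * h 0 + ∫ x in Ioi (0:ℝ), w x * g' x * h' x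

/-- Norm on the Filipović space `H_w`. -/
def wNorm (w g g' : ℝ → ℝ) : ℝ := Real.sqrt (wInner w g g' g g')

/-- `w : ℝ≥0 → [1,∞)` continuous, increasing, with `w 0 = 1`. -/
structure IsWeight (w : ℝ → ℝ) : Prop where
  cont : ContinuousOn w (Ici 0)
  mono : MonotoneOn w (Ici 0)
  one_le : ∀ x ∈ Ici (0:ℝ), 1 ≤ w x
  at_zero : w 0 = 1

/-- `g ∈ H_w` with derivative `g'`: `g` is absolutely continuous on `[0,∞)` with
a.e. derivative `g'`, and `∫₀^∞ w (g')² < ∞`. -/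
def MemHw (w g g' : ℝ → ℝ) : Prop :=
  (∀ x ∈ Ici (0:ℝ), g x = g 0 + ∫ t in Ioc (0:ℝ) x, g' t) ∧
  (∀ x ∈ Ici (0:ℝ), IntegrableOn g' (Ioc 0 x)) ∧
  IntegrableOn (fun x => w x * g' x ^ 2) (Ioi 0)

/-- The reproducing kernel `h_x(y) = 1 + ∫₀^{min(x,y)} 1/w(s) ds`. -/
def hker (w : ℝ → ℝ) (x y : ℝ) : ℝ := 1 + ∫ s in Ioc (0:ℝ) (min x y), 1 / w s

/-- Derivative of `h_x`. -/
def hker' (w : ℝ → ℝ) (x : ℝ) : ℝ → ℝ := (Iic x).indicator (fun s => 1 / w s)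


/-! Point evaluation `g ↦ g x` and `g ↦ ∫₀^∞ q(x,y) g'(y) dy` are both bounded linear functionals
on `H_w`: writing `u g' = (u / √w) (√w g')`, Cauchy–Schwarz bounds `|∫ u g'|` by
`‖u / √w‖₂ ‖g‖_w`, and `g x = g 0 + ∫₀ˣ g'` is the case `u = 1` on `(0, x]`. Hence `(T fₙ)(x)`
converges both to `(T f)(x)` and to `h x`. -/

open Topology

theorem integral_abs_mul_le_L2_mul_L2 {α : Type*} [MeasurableSpace α] {μ : Measure α}
    {u v : α → ℝ} (hu : MemLp u 2 μ) (hv : MemLp v 2 μ) :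
    ∫ y, |u y * v y| ∂μ ≤ √(∫ y, u y ^ 2 ∂μ) * √(∫ y, v y ^ 2 ∂μ) := by
  have h2 : ENNReal.ofReal 2 = 2 := by norm_num
  have hL2 := integral_mul_norm_le_Lp_mul_Lq (μ := μ) Real.HolderConjugate.two_two
    (h2 ▸ hu) (h2 ▸ hv)
  simp only [Real.norm_eq_abs, ← abs_mul, Real.rpow_two, sq_abs, ← Real.sqrt_eq_rpow] at hL2
  simpa only [one_div, ← Real.sqrt_eq_rpow] using hL2

theorem tendsto_of_abs_sub_le_mul {ι : Type*} {l : Filter ι} {c e : ι → ℝ} {a C : ℝ}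
    (hc : ∀ n, |c n - a| ≤ C * e n) (he : Tendsto e l (𝓝 0)) : Tendsto c l (𝓝 a) :=
  tendsto_sub_nhds_zero_iff.1 <| squeeze_zero_norm hc (by simpa using he.const_mul C)

theorem IsWeight.pos {w : ℝ → ℝ} (hw : IsWeight w) {y : ℝ} (hy : 0 ≤ y) : 0 < w y :=
  zero_lt_one.trans_le (hw.one_le y hy)

theorem IsWeight.aemeasurable {w : ℝ → ℝ} (hw : IsWeight w) {s : Set ℝ} (hs : s ⊆ Ici 0) :
    AEMeasurable w (volume.restrict s) :=
  (hw.cont.aemeasurable measurableSet_Ici).mono_measure (Measure.restrict_mono hs le_rfl)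

theorem wInner_self (w g g' : ℝ → ℝ) :
    wInner w g g' g g' = g 0 ^ 2 + ∫ x in Ioi (0:ℝ), w x * g' x ^ 2 := by
  simp only [wInner, sq, mul_assoc]

theorem sqrt_integral_le_wNorm (w g g' : ℝ → ℝ) :
    √(∫ x in Ioi (0:ℝ), w x * g' x ^ 2) ≤ wNorm w g g' := by
  rw [wNorm, wInner_self]
  exact Real.sqrt_le_sqrt (le_add_of_nonneg_left (sq_nonneg _))

theorem IsWeight.abs_eval_zero_le_wNorm {w : ℝ → ℝ} (hw : IsWeight w) (g g' : ℝ → ℝ) :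
    |g 0| ≤ wNorm w g g' := by
  have hJ : 0 ≤ ∫ x in Ioi (0:ℝ), w x * g' x ^ 2 :=
    setIntegral_nonneg measurableSet_Ioi fun y hy => mul_nonneg (hw.pos hy.le).le (sq_nonneg _)
  rw [wNorm, wInner_self, ← Real.sqrt_sq_eq_abs]
  exact Real.sqrt_le_sqrt (by linarith)

namespace MemHw

variable {w g g' : ℝ → ℝ}

theorem aestronglyMeasurable (hg : MemHw w g g') :
    AEStronglyMeasurable g' (volume.restrict (Ioi (0:ℝ))) := by
  rw [← iUnion_Ioc_eq_Ioi_self_iff.2 fun y _ => exists_nat_ge y, aestronglyMeasurable_iUnion_iff]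
  exact fun n => (hg.2.1 n (mem_Ici.2 n.cast_nonneg)).aestronglyMeasurable

theorem memLp_sqrt_mul (hw : IsWeight w) (hg : MemHw w g g') :
    MemLp (fun y => √(w y) * g' y) 2 (volume.restrict (Ioi (0:ℝ))) := by
  have hm : AEStronglyMeasurable (fun y => √(w y) * g' y) (volume.restrict (Ioi (0:ℝ))) :=
    (hw.aemeasurable Ioi_subset_Ici_self).sqrt.aestronglyMeasurable.mul hg.aestronglyMeasurable
  refine (memLp_two_iff_integrable_sq hm).2 (hg.2.2.congr ?_)
  filter_upwards [ae_restrict_mem measurableSet_Ioi] with y hy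
  rw [mul_pow, Real.sq_sqrt (hw.pos hy.le).le]

theorem sub (hw : IsWeight w) {k k' : ℝ → ℝ} (hg : MemHw w g g') (hk : MemHw w k k') :
    MemHw w (fun x => g x - k x) (fun x => g' x - k' x) := by
  refine ⟨fun x hx => ?_, fun x hx => (hg.2.1 x hx).sub (hk.2.1 x hx), ?_⟩
  · show g x - k x = g 0 - k 0 + _
    rw [integral_sub (hg.2.1 x hx) (hk.2.1 x hx), hg.1 x hx, hk.1 x hx]
    ring
  · refine ((hg.memLp_sqrt_mul hw).sub (hk.memLp_sqrt_mul hw)).integrable_sq.congr ?_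
    filter_upwards [ae_restrict_mem measurableSet_Ioi] with y hy
    rw [Pi.sub_apply, ← mul_sub, mul_pow, Real.sq_sqrt (hw.pos hy.le).le]

variable {s : Set ℝ} {u : ℝ → ℝ}

theorem integrableOn_mul (hw : IsWeight w) (hg : MemHw w g g') (hs_meas : MeasurableSet s)
    (hs : s ⊆ Ioi 0)
    (hu : MemLp (fun y => u y / √(w y)) 2 (volume.restrict s)) :
    IntegrableOn (fun y => u y * g' y) s := by
  have hv := (hg.memLp_sqrt_mul hw).mono_measure (Measure.restrict_mono hs le_rfl)
  refine (hu.integrable_mul hv).congr ?_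
  filter_upwards [ae_restrict_mem hs_meas] with y hy
  have := (Real.sqrt_pos.2 (hw.pos (hs hy).le)).ne'
  simp only [Pi.mul_apply]
  field_simp

theorem abs_setIntegral_mul_le (hw : IsWeight w) (hg : MemHw w g g') (hs_meas : MeasurableSet s)
    (hs : s ⊆ Ioi 0) (hu : MemLp (fun y => u y / √(w y)) 2 (volume.restrict s)) :
    |∫ y in s, u y * g' y| ≤ √(∫ y in s, (u y / √(w y)) ^ 2) * wNorm w g g' := by
  have hv := hg.memLp_sqrt_mul hw
  have hv_s : MemLp (fun y => √(w y) * g' y) 2 (volume.restrict s) :=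
    hv.mono_measure (Measure.restrict_mono hs le_rfl)
  have hv_sq : ∫ y in s, (√(w y) * g' y) ^ 2 ≤ ∫ y in Ioi 0, w y * g' y ^ 2 := by
    refine (setIntegral_mono_set hv.integrable_sq ?_ hs.eventuallyLE).trans_eq ?_
    · exact Eventually.of_forall fun y => sq_nonneg _
    · refine setIntegral_congr_fun measurableSet_Ioi fun y hy => ?_
      rw [mul_pow, Real.sq_sqrt (hw.pos hy.le).le]
  calc |∫ y in s, u y * g' y|
      = |∫ y in s, u y / √(w y) * (√(w y) * g' y)| := by
        refine congrArg _ (setIntegral_congr_fun hs_meas fun y hy => ?_)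
        have := (Real.sqrt_pos.2 (hw.pos (hs hy).le)).ne'
        field_simp
    _ ≤ ∫ y in s, |u y / √(w y) * (√(w y) * g' y)| := abs_integral_le_integral_abs
    _ ≤ √(∫ y in s, (u y / √(w y)) ^ 2) * √(∫ y in s, (√(w y) * g' y) ^ 2) :=
        integral_abs_mul_le_L2_mul_L2 hu hv_s
    _ ≤ √(∫ y in s, (u y / √(w y)) ^ 2) * wNorm w g g' := by
        gcongr
        exact (Real.sqrt_le_sqrt hv_sq).trans (sqrt_integral_le_wNorm w g g')

theorem abs_le_wNorm (hw : IsWeight w) (hg : MemHw w g g') {x : ℝ} (hx : 0 ≤ x) :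
    |g x| ≤ (1 + √x) * wNorm w g g' := by
  have hle : ∀ y ∈ Ioc 0 x, ‖1 / √(w y)‖ ≤ 1 := fun y hy => by
    rw [Real.norm_of_nonneg (by positivity)]
    exact div_le_one_of_le₀ (Real.one_le_sqrt.2 (hw.one_le y hy.1.le)) (Real.sqrt_nonneg _)
  have hu : MemLp (fun y => 1 / √(w y)) 2 (volume.restrict (Ioc 0 x)) := by
    have : IsFiniteMeasure (volume.restrict (Ioc (0:ℝ) x)) :=
      isFiniteMeasure_restrict.2 measure_Ioc_lt_top.ne
    have hw_meas : AEMeasurable w (volume.restrict (Ioc 0 x)) :=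
      hw.aemeasurable (Ioc_subset_Ioi_self.trans Ioi_subset_Ici_self)
    refine MemLp.of_bound (hw_meas.sqrt.const_div 1).aestronglyMeasurable 1 ?_
    filter_upwards [ae_restrict_mem measurableSet_Ioc] using hle
  have hu_sq : ∫ y in Ioc 0 x, (1 / √(w y)) ^ 2 ≤ x := by
    calc _ ≤ ‖∫ y in Ioc 0 x, (1 / √(w y)) ^ 2‖ := Real.le_norm_self _
      _ ≤ 1 * volume.real (Ioc 0 x) :=
        norm_setIntegral_le_of_norm_le_const measure_Ioc_lt_top fun y hy => by
          rw [norm_pow]; exact pow_le_one₀ (norm_nonneg _) (hle y hy)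
      _ = x := by simp [hx]
  have hint := hg.abs_setIntegral_mul_le hw measurableSet_Ioc Ioc_subset_Ioi_self hu
  simp only [one_mul] at hint
  calc |g x| = |g 0 + ∫ y in Ioc 0 x, g' y| := by rw [hg.1 x hx]
    _ ≤ |g 0| + |∫ y in Ioc 0 x, g' y| := abs_add_le _ _
    _ ≤ wNorm w g g' + √x * wNorm w g g' := by
        gcongr
        · exact hw.abs_eval_zero_le_wNorm g g'
        · exact hint.trans
            (mul_le_mul_of_nonneg_right (Real.sqrt_le_sqrt hu_sq) (Real.sqrt_nonneg _))
    _ = (1 + √x) * wNorm w g g' := by ring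

theorem abs_sub_integral_mul_le (hw : IsWeight w) {k k' : ℝ → ℝ} (hg : MemHw w g g')
    (hk : MemHw w k k') (hu : MemLp (fun y => u y / √(w y)) 2 (volume.restrict (Ioi 0))) :
    |(∫ y in Ioi 0, u y * g' y) - ∫ y in Ioi 0, u y * k' y| ≤
      √(∫ y in Ioi 0, (u y / √(w y)) ^ 2) *
        wNorm w (fun x => g x - k x) (fun x => g' x - k' x) := by
  rw [← integral_sub (hg.integrableOn_mul hw measurableSet_Ioi subset_rfl hu)
    (hk.integrableOn_mul hw measurableSet_Ioi subset_rfl hu)]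
  simp only [← mul_sub]
  exact (hg.sub hw hk).abs_setIntegral_mul_le hw measurableSet_Ioi subset_rfl hu

end MemHw

theorem stmt11_general (w : ℝ → ℝ) (hw : IsWeight w)
    (q : ℝ → ℝ → ℝ)
    (hq2 : ∀ x ∈ Ici (0:ℝ),
      MemLp (fun y => q x y / Real.sqrt (w y)) 2 (volume.restrict (Ioi (0:ℝ))))
    (fn fn' : ℕ → ℝ → ℝ) (Tfn' : ℕ → ℝ → ℝ) (f f' h h' : ℝ → ℝ)
    (hfn : ∀ n, MemHw w (fn n) (fn' n))
    (hf : MemHw w f f') (hh : MemHw w h h')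
    (hTfn : ∀ n, MemHw w (fun x => ∫ y in Ioi (0:ℝ), q x y * fn' n y) (Tfn' n))
    (hconv : Tendsto (fun n =>
      wNorm w (fun x => fn n x - f x) (fun x => fn' n x - f' x)) atTop (nhds 0))
    (hconv' : Tendsto (fun n =>
      wNorm w (fun x => (∫ y in Ioi (0:ℝ), q x y * fn' n y) - h x)
        (fun x => Tfn' n x - h' x)) atTop (nhds 0)) :
    (∀ x ∈ Ici (0:ℝ), Integrable (fun y => q x y * f' y) (volume.restrict (Ioi (0:ℝ)))) ∧
    (∀ x ∈ Ici (0:ℝ), (∫ y in Ioi (0:ℝ), q x y * f' y) = h x) := by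
  refine ⟨fun x hx => hf.integrableOn_mul hw measurableSet_Ioi subset_rfl (hq2 x hx),
    fun x hx => ?_⟩
  have hTf_lim : Tendsto (fun n => ∫ y in Ioi 0, q x y * fn' n y) atTop
      (𝓝 (∫ y in Ioi 0, q x y * f' y)) :=
    tendsto_of_abs_sub_le_mul (fun n => (hfn n).abs_sub_integral_mul_le hw hf (hq2 x hx)) hconv
  have hh_lim : Tendsto (fun n => ∫ y in Ioi 0, q x y * fn' n y) atTop (𝓝 (h x)) :=
    tendsto_of_abs_sub_le_mul (fun n => ((hTfn n).sub hw hh).abs_le_wNorm hw hx) hconv'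
  exact tendsto_nhds_unique hTf_lim hh_lim

/-- if `q(x,·)/√w ∈ L²(ℝ≥0)` for every `x ≥ 0`, the integral
operator `Tf(x) = ∫₀^∞ q(x,y) f'(y) dy` (with its natural domain) is closed:
if `fₙ` is in the domain, `fₙ → f` and `Tfₙ → h` in `H_w`, then `f` is in the
domain and `Tf = h` on `[0,∞)`. -/
theorem stmt11 (w : ℝ → ℝ) (hw : IsWeight w)
    (q : ℝ → ℝ → ℝ) (hq : Measurable (Function.uncurry q))
    (hq2 : ∀ x ∈ Ici (0:ℝ),
      MemLp (fun y => q x y / Real.sqrt (w y)) 2 (volume.restrict (Ioi (0:ℝ))))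
    (fn fn' : ℕ → ℝ → ℝ) (Tfn' : ℕ → ℝ → ℝ) (f f' h h' : ℝ → ℝ)
    (hfn : ∀ n, MemHw w (fn n) (fn' n))
    (hf : MemHw w f f') (hh : MemHw w h h')
    (hdom : ∀ n, ∀ x ∈ Ici (0:ℝ),
      Integrable (fun y => q x y * fn' n y) (volume.restrict (Ioi (0:ℝ))))
    (hTfn : ∀ n, MemHw w (fun x => ∫ y in Ioi (0:ℝ), q x y * fn' n y) (Tfn' n))
    (hconv : Tendsto (fun n =>
      wNorm w (fun x => fn n x - f x) (fun x => fn' n x - f' x)) atTop (nhds 0))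
    (hconv' : Tendsto (fun n =>
      wNorm w (fun x => (∫ y in Ioi (0:ℝ), q x y * fn' n y) - h x)
        (fun x => Tfn' n x - h' x)) atTop (nhds 0)) :
    (∀ x ∈ Ici (0:ℝ), Integrable (fun y => q x y * f' y) (volume.restrict (Ioi (0:ℝ)))) ∧
    (∀ x ∈ Ici (0:ℝ), (∫ y in Ioi (0:ℝ), q x y * f' y) = h x) :=
  stmt11_general w hw q hq2 fn fn' Tfn' f f' h h' hfn hf hh hTfn hconv hconv'
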